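/- Define, for disjoint A, B ⊆ N and S ⊆ B: J_{A,B}(S) := I(X_S; Ŷ_{B\S}, Ŷ_A, Y | X_A, X_{B\S}) − I(Y_S; Ŷ_S | X_A, Ŷ_A, Y, X_B, Ŷ_{B\S}). If B is nonempty and J_{A,B}(B) ≥ 0, then there exists a nonempty C ⊆ B such that J_{A,C}(S) ≥ 0 for all S ⊆ C. -/

import Mathlib

open Finset
attribute [local instance] Classical.propDecidable

/-- Shannon entropy of a random variable `f` on a finite probability space
with mass function `p`. -/
noncomputable def ent {Ω α : Type} [Fintype Ω] [Fintype α] [DecidableEq α]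
    (p : Ω → ℝ) (f : Ω → α) : ℝ :=
  ∑ a : α, Real.negMulLog (∑ ω ∈ Finset.univ.filter (fun ω => f ω = a), p ω)

/-- Conditional mutual information `I(f; g | h)`. -/
noncomputable def cmi {Ω α β γ : Type} [Fintype Ω] [Fintype α] [DecidableEq α]
    [Fintype β] [DecidableEq β] [Fintype γ] [DecidableEq γ]
    (p : Ω → ℝ) (f : Ω → α) (g : Ω → β) (h : Ω → γ) : ℝ :=
  ent p (fun ω => (f ω, h ω)) + ent p (fun ω => (g ω, h ω))
    - ent p (fun ω => (f ω, g ω, h ω)) - ent p h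

/-- Mutual information `I(f; g)`. -/
noncomputable def mi {Ω α β : Type} [Fintype Ω] [Fintype α] [DecidableEq α]
    [Fintype β] [DecidableEq β] (p : Ω → ℝ) (f : Ω → α) (g : Ω → β) : ℝ :=
  ent p f + ent p g - ent p (fun ω => (f ω, g ω))

/-- Conditional entropy `H(f | g)`. -/
noncomputable def condEnt {Ω α β : Type} [Fintype Ω] [Fintype α] [DecidableEq α]
    [Fintype β] [DecidableEq β] (p : Ω → ℝ) (f : Ω → α) (g : Ω → β) : ℝ :=
  ent p (fun ω => (f ω, g ω)) - ent p g

/-- The tuple of random variables `(Z_i)_{i ∈ S}`. -/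
def restr {Ω ι V : Type} (Z : ι → Ω → V) (S : Finset ι) (ω : Ω) :
    {i // i ∈ S} → V := fun i => Z i.1 ω


/-! Write `T = B \ S`. Expanding every conditional mutual information into entropies, the
difference `J_{A,B}(S) + J_{A,T}(T) - J_{A,B}(B)` becomes a sum of three submodularity gaps of
the set function `(K, L, M) ↦ H(X_K, Y_L, Ŷ_M, Y)`, each a conditional mutual information and
hence nonnegative by Gibbs' inequality `log x ≤ x - 1`. So `J_{A,B}(B) ≤ J_{A,B}(S) + J_{A,T}(T)`.
If `J_{A,B}(S) < 0` for some `S ⊆ B`, then `S ≠ ∅` since `J_{A,B}(∅) = 0`, and `S ≠ B`, so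
`J_{A,T}(T) > 0` for the strictly smaller nonempty set `T`; strong induction on `B` concludes. -/

open Real

lemma sub_div_le_mul_log {x y z t : ℝ} (hx : 0 < x) (hy : 0 < y) (hz : 0 < z) (ht : 0 < t) :
    x - y * z / t ≤ x * (log x + log t - log y - log z) := by
  have key := one_sub_inv_le_log_of_pos (x := x * t / (y * z)) (by positivity)
  rw [log_div (by positivity) (by positivity), log_mul hx.ne' ht.ne',
    log_mul hy.ne' hz.ne', inv_div] at key
  calc x - y * z / t = x * (1 - y * z / (x * t)) := by field_simp
    _ ≤ x * (log x + log t - (log y + log z)) := mul_le_mul_of_nonneg_left key hx.le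
    _ = _ := by ring

lemma mutualInfo_nonneg {α β : Type} [Fintype α] [Fintype β] (P : α → β → ℝ)
    (hP : ∀ a b, 0 ≤ P a b) :
    0 ≤ ∑ a, negMulLog (∑ b, P a b) + ∑ b, negMulLog (∑ a, P a b)
      - ∑ a, ∑ b, negMulLog (P a b) - negMulLog (∑ a, ∑ b, P a b) := by
  set r := fun a => ∑ b, P a b
  set s := fun b => ∑ a, P a b
  set t := ∑ a, r a
  have expand : ∑ a, negMulLog (r a) + ∑ b, negMulLog (s b)
      - ∑ a, ∑ b, negMulLog (P a b) - negMulLog t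
      = ∑ a, ∑ b, P a b * (log (P a b) + log t - log (r a) - log (s b)) := by
    have e_r : ∑ a, negMulLog (r a) = -∑ a, ∑ b, P a b * log (r a) := by
      simp only [negMulLog, neg_mul, sum_neg_distrib, r, sum_mul]
    have e_s : ∑ b, negMulLog (s b) = -∑ a, ∑ b, P a b * log (s b) := by
      simp only [negMulLog, neg_mul, sum_neg_distrib, s, sum_mul]
      exact congrArg _ sum_comm
    have e_t : negMulLog t = -∑ a, ∑ b, P a b * log t := by
      simp only [negMulLog, neg_mul, t, r, sum_mul]
    have e_P : ∑ a, ∑ b, negMulLog (P a b) = -∑ a, ∑ b, P a b * log (P a b) := by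
      simp only [negMulLog, neg_mul, sum_neg_distrib]
    rw [e_r, e_s, e_t, e_P]
    simp only [mul_add, mul_sub, sum_add_distrib, sum_sub_distrib]
    ring
  have termwise : ∀ a b, P a b - r a * s b / t
      ≤ P a b * (log (P a b) + log t - log (r a) - log (s b)) := by
    intro a b
    have hr : P a b ≤ r a := single_le_sum (fun b _ => hP a b) (mem_univ b)
    have hs : P a b ≤ s b := single_le_sum (fun a _ => hP a b) (mem_univ a)
    have ht : r a ≤ t := single_le_sum (fun a _ => sum_nonneg fun b _ => hP a b) (mem_univ a)
    rcases (hP a b).eq_or_lt with h0 | hpos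
    · rw [← h0, zero_mul, zero_sub, neg_nonpos]
      exact div_nonneg (mul_nonneg (h0 ▸ hr) (h0 ▸ hs)) (h0 ▸ hr.trans ht)
    · exact sub_div_le_mul_log hpos (hpos.trans_le hr) (hpos.trans_le hs)
        ((hpos.trans_le hr).trans_le ht)
  have total : ∑ a, ∑ b, (P a b - r a * s b / t) = 0 := by
    have hst : ∑ b, s b = t := sum_comm
    simp only [sum_sub_distrib, ← sum_div, ← mul_sum, ← sum_mul, hst]
    rw [mul_self_div_self, sub_self]
  rw [expand, ← total]
  exact sum_le_sum fun a _ => sum_le_sum fun b _ => termwise a b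

section Entropy

variable {Ω α β γ : Type}

def SameFibers (f : Ω → α) (g : Ω → β) : Prop :=
  ∀ ω ω', f ω = f ω' ↔ g ω = g ω'

lemma SameFibers.refl (f : Ω → α) : SameFibers f f := fun _ _ => Iff.rfl

lemma sameFibers_pair_of_determined {f : Ω → α} {h : Ω → γ}
    (hfh : ∀ ω ω', f ω = f ω' → h ω = h ω') : SameFibers (fun ω => (f ω, h ω)) f :=
  fun ω ω' => by simpa using hfh ω ω'

variable [Fintype Ω] (p : Ω → ℝ)

noncomputable def mass [DecidableEq α] (f : Ω → α) (a : α) : ℝ :=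
  ∑ ω ∈ univ.filter (fun ω => f ω = a), p ω

lemma ent_eq_sum_mass [Fintype α] [DecidableEq α] (f : Ω → α) :
    ent p f = ∑ a, negMulLog (mass p f a) := rfl

lemma ent_eq_sum_image [Fintype α] [DecidableEq α] (f : Ω → α) :
    ent p f = ∑ a ∈ univ.image f, negMulLog (mass p f a) := by
  refine (sum_subset (subset_univ _) fun a _ ha => ?_).symm
  have : univ.filter (fun ω => f ω = a) = ∅ :=
    filter_eq_empty_iff.2 fun ω _ hω => ha (hω ▸ mem_image_of_mem f (mem_univ ω))
  simp [this]

lemma ent_comp_of_injOn [Fintype α] [DecidableEq α] [Fintype β] [DecidableEq β]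
    {f : Ω → α} {φ : α → β} (hφ : Set.InjOn φ (Set.range f)) :
    ent p (φ ∘ f) = ent p f := by
  have hφ' : Set.InjOn φ (univ.image f : Set α) := by simpa using hφ
  rw [ent_eq_sum_image, ent_eq_sum_image, ← image_image, sum_image hφ']
  refine sum_congr rfl fun a ha => ?_
  obtain ⟨ω₀, -, rfl⟩ := mem_image.1 ha
  unfold mass
  congr 2
  ext ω
  simpa using hφ.eq_iff (Set.mem_range_self ω) (Set.mem_range_self ω₀)

lemma ent_congr [Fintype α] [DecidableEq α] [Fintype β] [DecidableEq β] {f : Ω → α}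
    {g : Ω → β} (h : SameFibers f g) : ent p f = ent p g := by
  have hfst : Set.InjOn Prod.fst (Set.range fun ω => (f ω, g ω)) := by
    rintro _ ⟨ω, rfl⟩ _ ⟨ω', rfl⟩ hωω'
    exact Prod.ext hωω' ((h ω ω').1 hωω')
  have hsnd : Set.InjOn Prod.snd (Set.range fun ω => (f ω, g ω)) := by
    rintro _ ⟨ω, rfl⟩ _ ⟨ω', rfl⟩ hωω'
    exact Prod.ext ((h ω ω').2 hωω') hωω'
  have h₁ : ent p f = ent p (fun ω => (f ω, g ω)) := ent_comp_of_injOn p hfst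
  have h₂ : ent p g = ent p (fun ω => (f ω, g ω)) := ent_comp_of_injOn p hsnd
  rw [h₁, h₂]

lemma cmi_eq_of_sameFibers {δ₁ δ₂ δ₃ δ₄ : Type} [Fintype α] [DecidableEq α] [Fintype β]
    [DecidableEq β] [Fintype γ] [DecidableEq γ] [Fintype δ₁] [DecidableEq δ₁] [Fintype δ₂]
    [DecidableEq δ₂] [Fintype δ₃] [DecidableEq δ₃] [Fintype δ₄] [DecidableEq δ₄]
    {f : Ω → α} {g : Ω → β} {h : Ω → γ}
    {U₁ : Ω → δ₁} {U₂ : Ω → δ₂} {U₃ : Ω → δ₃} {U₄ : Ω → δ₄}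
    (h₁ : SameFibers (fun ω => (f ω, h ω)) U₁) (h₂ : SameFibers (fun ω => (g ω, h ω)) U₂)
    (h₃ : SameFibers (fun ω => (f ω, g ω, h ω)) U₃) (h₄ : SameFibers h U₄) :
    cmi p f g h = ent p U₁ + ent p U₂ - ent p U₃ - ent p U₄ := by
  rw [cmi, ent_congr p h₁, ent_congr p h₂, ent_congr p h₃, ent_congr p h₄]

lemma mass_eq_sum_mass [DecidableEq α] [Fintype β] [DecidableEq β] [DecidableEq γ]
    {F : Ω → α} {G : Ω → γ} (g : Ω → β) (x : α) (e : β → γ)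
    (he : ∀ ω b, G ω = e b ↔ F ω = x ∧ g ω = b) :
    mass p F x = ∑ b, mass p G (e b) := by
  unfold mass
  rw [← sum_fiberwise (univ.filter fun ω => F ω = x) g p]
  refine sum_congr rfl fun b _ => sum_congr ?_ fun _ _ => rfl
  ext ω
  simp [he]

lemma cmi_nonneg [Fintype α] [DecidableEq α] [Fintype β] [DecidableEq β] [Fintype γ]
    [DecidableEq γ] (hp : ∀ ω, 0 ≤ p ω) (f : Ω → α) (g : Ω → β) (h : Ω → γ) :
    0 ≤ cmi p f g h := by
  obtain ⟨P, hP⟩ : ∃ P : α → β → γ → ℝ,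
      ∀ a b c, mass p (fun ω => (f ω, g ω, h ω)) (a, b, c) = P a b c := ⟨_, fun _ _ _ => rfl⟩
  have hfh : ∀ a c, mass p (fun ω => (f ω, h ω)) (a, c) = ∑ b, P a b c := fun a c => by
    simp only [← hP]
    exact mass_eq_sum_mass p g (a, c) (fun b => (a, b, c)) fun ω b => by
      simp only [Prod.mk.injEq]; tauto
  have hgh : ∀ b c, mass p (fun ω => (g ω, h ω)) (b, c) = ∑ a, P a b c := fun b c => by
    simp only [← hP]
    exact mass_eq_sum_mass p f (b, c) (fun a => (a, b, c)) fun ω a => by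
      simp only [Prod.mk.injEq]; tauto
  have hh : ∀ c, mass p h c = ∑ a, ∑ b, P a b c := fun c => by
    simp only [← hfh]
    exact mass_eq_sum_mass p f c (fun a => (a, c)) fun ω a => by
      simp only [Prod.mk.injEq]; tauto
  have hcmi : cmi p f g h = ∑ c, (∑ a, negMulLog (∑ b, P a b c) + ∑ b, negMulLog (∑ a, P a b c)
      - ∑ a, ∑ b, negMulLog (P a b c) - negMulLog (∑ a, ∑ b, P a b c)) := by
    simp only [cmi, ent_eq_sum_mass, Fintype.sum_prod_type, hP, hfh, hgh, hh, sum_add_distrib,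
      sum_sub_distrib]
    have htriple : ∑ a, ∑ b, ∑ c, negMulLog (P a b c) = ∑ c, ∑ a, ∑ b, negMulLog (P a b c) :=
      (sum_congr rfl fun a _ => sum_comm).trans sum_comm
    rw [htriple, sum_comm (s := (univ : Finset α)), sum_comm (s := (univ : Finset β))]
  rw [hcmi]
  refine sum_nonneg fun c _ => mutualInfo_nonneg (P · · c) fun a b => ?_
  rw [← hP]
  exact sum_nonneg fun ω _ => hp ω

end Entropy

lemma restr_eq_iff {Ω ι V : Type} {Z : ι → Ω → V} {K : Finset ι} {ω ω' : Ω} :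
    restr Z K ω = restr Z K ω' ↔ ∀ i ∈ K, Z i ω = Z i ω' :=
  ⟨fun h i hi => congrFun h ⟨i, hi⟩, fun h => funext fun i => h i.1 i.2⟩

section Relay

variable {Ω ι V : Type} (p : Ω → ℝ) (Xi Yv Yh : ι → Ω → V) (Y : Ω → V)

def relayObs (K L M : Finset ι) (ω : Ω) :
    ({i // i ∈ K} → V) × ({i // i ∈ L} → V) × ({i // i ∈ M} → V) × V :=
  (restr Xi K ω, restr Yv L ω, restr Yh M ω, Y ω)

lemma relayObs_eq_iff {K L M : Finset ι} {ω ω' : Ω} :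
    relayObs Xi Yv Yh Y K L M ω = relayObs Xi Yv Yh Y K L M ω' ↔
      (∀ i ∈ K, Xi i ω = Xi i ω') ∧ (∀ i ∈ L, Yv i ω = Yv i ω') ∧
        (∀ i ∈ M, Yh i ω = Yh i ω') ∧ Y ω = Y ω' := by
  simp only [relayObs, Prod.mk.injEq, restr_eq_iff]

lemma relayObs_eq_of_subset {K L M K' L' M' : Finset ι} (hK : K' ⊆ K) (hL : L' ⊆ L)
    (hM : M' ⊆ M) (ω ω' : Ω)
    (h : relayObs Xi Yv Yh Y K L M ω = relayObs Xi Yv Yh Y K L M ω') :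
    relayObs Xi Yv Yh Y K' L' M' ω = relayObs Xi Yv Yh Y K' L' M' ω' := by
  rw [relayObs_eq_iff] at h ⊢
  obtain ⟨hX, hYv, hYh, hY⟩ := h
  exact ⟨fun i hi => hX i (hK hi), fun i hi => hYv i (hL hi), fun i hi => hYh i (hM hi), hY⟩

variable [DecidableEq ι]

lemma relayObs_union_eq_iff {K L M K' L' M' : Finset ι} {ω ω' : Ω} :
    relayObs Xi Yv Yh Y (K ∪ K') (L ∪ L') (M ∪ M') ω
        = relayObs Xi Yv Yh Y (K ∪ K') (L ∪ L') (M ∪ M') ω' ↔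
      relayObs Xi Yv Yh Y K L M ω = relayObs Xi Yv Yh Y K L M ω' ∧
        relayObs Xi Yv Yh Y K' L' M' ω = relayObs Xi Yv Yh Y K' L' M' ω' := by
  simp only [relayObs_eq_iff, forall_mem_union]
  tauto

variable [Fintype Ω] [Fintype V] [DecidableEq V]

noncomputable def relayEnt (K L M : Finset ι) : ℝ :=
  ent p (relayObs Xi Yv Yh Y K L M)

lemma relayEnt_union_add_inter_le (hp : ∀ ω, 0 ≤ p ω) (K L M K' L' M' : Finset ι) :
    relayEnt p Xi Yv Yh Y (K ∪ K') (L ∪ L') (M ∪ M')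
        + relayEnt p Xi Yv Yh Y (K ∩ K') (L ∩ L') (M ∩ M')
      ≤ relayEnt p Xi Yv Yh Y K L M + relayEnt p Xi Yv Yh Y K' L' M' := by
  have hK := relayObs_eq_of_subset Xi Yv Yh Y (K := K) (L := L) (M := M)
    (K' := K ∩ K') (L' := L ∩ L') (M' := M ∩ M') inter_subset_left inter_subset_left
    inter_subset_left
  have hK' := relayObs_eq_of_subset Xi Yv Yh Y (K := K') (L := L') (M := M')
    (K' := K ∩ K') (L' := L ∩ L') (M' := M ∩ M') inter_subset_right inter_subset_right
    inter_subset_right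
  have key := cmi_nonneg p hp (relayObs Xi Yv Yh Y K L M) (relayObs Xi Yv Yh Y K' L' M')
    (relayObs Xi Yv Yh Y (K ∩ K') (L ∩ L') (M ∩ M'))
  rw [cmi_eq_of_sameFibers p (sameFibers_pair_of_determined hK)
    (sameFibers_pair_of_determined hK')
    (U₃ := relayObs Xi Yv Yh Y (K ∪ K') (L ∪ L') (M ∪ M')) ?_ (SameFibers.refl _)] at key
  · unfold relayEnt
    linarith
  · intro ω ω'
    simp only [relayObs_union_eq_iff, Prod.mk.injEq]
    exact ⟨fun h => ⟨h.1, h.2.1⟩, fun h => ⟨h.1, h.2, hK ω ω' h.1⟩⟩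

noncomputable def relayJ (A B S : Finset ι) : ℝ :=
  cmi p (restr Xi S)
    (fun ω => (restr Yh (B \ S) ω, restr Yh A ω, Y ω))
    (fun ω => (restr Xi A ω, restr Xi (B \ S) ω)) -
  cmi p (restr Yv S) (restr Yh S)
    (fun ω => (restr Xi A ω, restr Yh A ω, Y ω, restr Xi B ω, restr Yh (B \ S) ω))

lemma relayJ_eq {A B S : Finset ι} (hS : S ⊆ B) :
    relayJ p Xi Yv Yh Y A B S
      = ent p (restr Xi (A ∪ B)) - ent p (restr Xi (A ∪ (B \ S)))
        + relayEnt p Xi Yv Yh Y (A ∪ (B \ S)) ∅ (A ∪ (B \ S))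
        - relayEnt p Xi Yv Yh Y (A ∪ B) ∅ (A ∪ B)
        - relayEnt p Xi Yv Yh Y (A ∪ B) S (A ∪ (B \ S))
        + relayEnt p Xi Yv Yh Y (A ∪ B) S (A ∪ B) := by
  obtain ⟨T, hT⟩ : ∃ T, B \ S = T := ⟨_, rfl⟩
  have hB : B = S ∪ T := by rw [← hT, union_sdiff_of_subset hS]
  rw [relayJ, hT, hB, relayEnt, relayEnt, relayEnt, relayEnt,
    cmi_eq_of_sameFibers p (U₁ := restr Xi (A ∪ (S ∪ T)))
      (U₂ := relayObs Xi Yv Yh Y (A ∪ T) ∅ (A ∪ T))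
      (U₃ := relayObs Xi Yv Yh Y (A ∪ (S ∪ T)) ∅ (A ∪ T)) (U₄ := restr Xi (A ∪ T)) ?_ ?_ ?_ ?_,
    cmi_eq_of_sameFibers p (U₁ := relayObs Xi Yv Yh Y (A ∪ (S ∪ T)) S (A ∪ T))
      (U₂ := relayObs Xi Yv Yh Y (A ∪ (S ∪ T)) ∅ (A ∪ (S ∪ T)))
      (U₃ := relayObs Xi Yv Yh Y (A ∪ (S ∪ T)) S (A ∪ (S ∪ T)))
      (U₄ := relayObs Xi Yv Yh Y (A ∪ (S ∪ T)) ∅ (A ∪ T)) ?_ ?_ ?_ ?_]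
  · ring
  all_goals
    intro ω ω'
    simp only [relayObs_eq_iff, restr_eq_iff, Prod.mk.injEq, forall_mem_union, notMem_empty,
      false_imp_iff, implies_true, true_and] <;> tauto

lemma relayJ_empty (A B : Finset ι) : relayJ p Xi Yv Yh Y A B ∅ = 0 := by
  rw [relayJ_eq p Xi Yv Yh Y (empty_subset B), sdiff_empty]
  ring

lemma relayJ_self_le (hp : ∀ ω, 0 ≤ p ω) {A B S : Finset ι} (hS : S ⊆ B) :
    relayJ p Xi Yv Yh Y A B B
      ≤ relayJ p Xi Yv Yh Y A B S + relayJ p Xi Yv Yh Y A (B \ S) (B \ S) := by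
  rw [relayJ_eq p Xi Yv Yh Y subset_rfl, relayJ_eq p Xi Yv Yh Y hS,
    relayJ_eq p Xi Yv Yh Y subset_rfl, Finset.sdiff_self, Finset.sdiff_self, union_empty]
  set T := B \ S
  have hTB : T ⊆ B := sdiff_subset
  have hAT : A ∪ T ⊆ A ∪ B := union_subset_union_right hTB
  have h₁ := relayEnt_union_add_inter_le p Xi Yv Yh Y hp (A ∪ B) T A (A ∪ T) T (A ∪ T)
  have h₂ := relayEnt_union_add_inter_le p Xi Yv Yh Y hp (A ∪ B) B A (A ∪ B) T (A ∪ T)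
  have h₃ := relayEnt_union_add_inter_le p Xi Yv Yh Y hp (A ∪ B) B (A ∪ T) (A ∪ B) S (A ∪ B)
  simp only [union_self, inter_self, union_eq_left.2 hAT, inter_eq_right.2 hAT,
    union_eq_right.2 hAT, inter_eq_left.2 hAT, union_eq_left.2 hTB, inter_eq_right.2 hTB,
    union_eq_left.2 hS, inter_eq_right.2 hS, union_eq_right.2 (subset_union_left (s₂ := T)),
    inter_eq_left.2 (subset_union_left (s₂ := T))] at h₁ h₂ h₃
  linarith

end Relay

lemma exists_subset_forall_nonneg {ι : Type} [DecidableEq ι] (J : Finset ι → Finset ι → ℝ)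
    (hJ₀ : ∀ B, 0 ≤ J B ∅) (hJ : ∀ B S, S ⊆ B → J B B ≤ J B S + J (B \ S) (B \ S))
    (B : Finset ι) (hB : B.Nonempty) (hBB : 0 ≤ J B B) :
    ∃ C ⊆ B, C.Nonempty ∧ ∀ S ⊆ C, 0 ≤ J C S := by
  induction B using Finset.strongInduction with
  | H B ih =>
    by_cases hall : ∀ S ⊆ B, 0 ≤ J B S
    · exact ⟨B, subset_rfl, hB, hall⟩
    push Not at hall
    obtain ⟨S, hSB, hS⟩ := hall
    have hSne : S.Nonempty := nonempty_iff_ne_empty.2 fun h => (h ▸ hS).not_ge (hJ₀ B)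
    have hTne : (B \ S).Nonempty := by
      refine nonempty_iff_ne_empty.2 fun h => ?_
      rw [hSB.antisymm (sdiff_eq_empty_iff_subset.1 h)] at hS
      exact hS.not_ge hBB
    obtain ⟨C, hC, hCne, hCnonneg⟩ :=
      ih _ (sdiff_ssubset hSB hSne) hTne (by linarith [hJ B S hSB])
    exact ⟨C, hC.trans sdiff_subset, hCne, hCnonneg⟩

theorem stmt_14_general {Ω ι V : Type} [Fintype Ω] [DecidableEq ι]
    [Fintype V] [DecidableEq V]
    (p : Ω → ℝ) (hp0 : ∀ ω, 0 ≤ p ω)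
    (Y : Ω → V) (Xi Yv Yh : ι → Ω → V)
    (JAB : Finset ι → Finset ι → Finset ι → ℝ)
    (hJAB : ∀ A B S : Finset ι, JAB A B S =
      cmi p (restr Xi S)
        (fun ω => (restr Yh (B \ S) ω, restr Yh A ω, Y ω))
        (fun ω => (restr Xi A ω, restr Xi (B \ S) ω)) -
      cmi p (restr Yv S) (restr Yh S)
        (fun ω => (restr Xi A ω, restr Yh A ω, Y ω, restr Xi B ω, restr Yh (B \ S) ω)))
    (A B : Finset ι) (hBne : B.Nonempty)
    (hB : 0 ≤ JAB A B B) :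
    ∃ C : Finset ι, C ⊆ B ∧ C.Nonempty ∧ ∀ S ⊆ C, 0 ≤ JAB A C S := by
  obtain rfl : JAB = relayJ p Xi Yv Yh Y := funext fun A => funext fun B => funext (hJAB A B)
  exact exists_subset_forall_nonneg (relayJ p Xi Yv Yh Y A)
    (fun B => (relayJ_empty p Xi Yv Yh Y A B).ge)
    (fun _ _ hS => relayJ_self_le p Xi Yv Yh Y hp0 hS) B hBne hB

theorem stmt_14 {Ω ι VX V : Type} [Fintype Ω] [Fintype ι] [DecidableEq ι]
    [Fintype VX] [DecidableEq VX] [Fintype V] [DecidableEq V]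
    (p : Ω → ℝ) (hp0 : ∀ ω, 0 ≤ p ω) (hp1 : ∑ ω, p ω = 1)
    (X : Ω → VX) (Y : Ω → V) (Xi Yv Yh : ι → Ω → V)
    (JAB : Finset ι → Finset ι → Finset ι → ℝ)
    (hJAB : ∀ A B S : Finset ι, JAB A B S =
      cmi p (restr Xi S)
        (fun ω => (restr Yh (B \ S) ω, restr Yh A ω, Y ω))
        (fun ω => (restr Xi A ω, restr Xi (B \ S) ω)) -
      cmi p (restr Yv S) (restr Yh S)
        (fun ω => (restr Xi A ω, restr Yh A ω, Y ω, restr Xi B ω, restr Yh (B \ S) ω)))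
    (A B : Finset ι) (hAB : Disjoint A B) (hBne : B.Nonempty)
    (hB : 0 ≤ JAB A B B) :
    ∃ C : Finset ι, C ⊆ B ∧ C.Nonempty ∧ ∀ S ⊆ C, 0 ≤ JAB A C S :=
  stmt_14_general p hp0 Y Xi Yv Yh JAB hJAB A B hBne hB
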